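/- arXiv:2108.05201 — 2 statements merged into one kernel-verified Lean document; each statement's English description precedes it below -/
import Mathlib

section
/- Let γ denote the Euler–Mascheroni constant. For every ρ_0 ∈ (0,1), every λ > 0, and every t_0 ≥ e^{1-γ} e^{2/ρ_0}, the function f_1(ρ) = -1/(λ² t_0^{ρ+1} Γ(-ρ)) satisfies f_1'(ρ) ≤ -1/(λ² t_0^{ρ+1}) for all ρ ∈ [ρ_0, 1). -/
/-!
With `g(ρ) = 1/Γ(-ρ)` and `L = log t₀` one has `f₁' = -(g' - L g)/(λ² t₀^{ρ+1})`, so the claim is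
`g' - L g ≥ 1`. The identity `g(ρ) = -ρ(1-ρ)/Γ(2-ρ)` makes `g` differentiable on `ρ < 2` and
turns this into `Γ(2-ρ) ≤ ρ(1-ρ)(L - Ψ(2-ρ)) - (1-2ρ)` with `Ψ = Γ'/Γ`. Log-convexity of `Γ` gives
`Ψ(2-ρ) ≤ Ψ(2) = 1 - γ`, and convexity gives `Γ(2-ρ) ≤ max(Γ 1, Γ 2) = 1`; since
`L ≥ 1 - γ + 2/ρ`, the right-hand side is at least `2(1-ρ) - (1-2ρ) = 1`.
-/

open Real Set

namespace Real

theorem inv_Gamma_eq_mul_inv_Gamma_add_one (s : ℝ) : (Gamma s)⁻¹ = s * (Gamma (s + 1))⁻¹ := by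
  rcases ne_or_eq s 0 with h | rfl
  · rw [Gamma_add_one h, mul_inv, mul_inv_cancel_left₀ h]
  · rw [zero_add, Gamma_zero, inv_zero, zero_mul]

/-- Valid for every real `x`, including the poles of `Γ(-x)`, thanks to `0⁻¹ = 0`. -/
theorem inv_Gamma_neg (x : ℝ) : (Gamma (-x))⁻¹ = -(x * (1 - x)) * (Gamma (2 - x))⁻¹ := by
  rw [inv_Gamma_eq_mul_inv_Gamma_add_one, inv_Gamma_eq_mul_inv_Gamma_add_one (-x + 1),
    show -x + 1 + 1 = 2 - x by ring]
  ring

theorem differentiableAt_Gamma_of_pos {x : ℝ} (hx : 0 < x) : DifferentiableAt ℝ Gamma x :=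
  differentiableOn_Gamma_Ioi.differentiableAt (Ioi_mem_nhds hx)

theorem hasDerivAt_inv_Gamma_neg {x : ℝ} (hx : x < 2) :
    HasDerivAt (fun y => (Gamma (-y))⁻¹)
      (-((1 - 2 * x) + x * (1 - x) * logDeriv Gamma (2 - x)) / Gamma (2 - x)) x := by
  have hpos : 0 < Gamma (2 - x) := Gamma_pos_of_pos (by linarith)
  have hGamma : HasDerivAt (fun y => Gamma (2 - y)) (-deriv Gamma (2 - x)) x :=
    (differentiableAt_Gamma_of_pos (by linarith)).hasDerivAt.comp_const_sub 2 x
  have hpoly : HasDerivAt (fun y : ℝ => -(y * (1 - y))) (-(1 - 2 * x)) x :=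
    ((hasDerivAt_id' x).mul ((hasDerivAt_id' x).const_sub 1)).neg.congr_deriv (by ring)
  rw [funext inv_Gamma_neg]
  refine (hpoly.mul (hGamma.inv hpos.ne')).congr_deriv ?_
  rw [Pi.inv_apply, logDeriv_apply]
  field_simp
  ring

theorem monotoneOn_logDeriv_Gamma : MonotoneOn (logDeriv Gamma) (Ioi 0) := by
  have hlog : ∀ x ∈ Ioi (0 : ℝ), DifferentiableAt ℝ (log ∘ Gamma) x := fun x hx =>
    (differentiableAt_Gamma_of_pos hx).log (Gamma_pos_of_pos hx).ne'
  refine (convexOn_log_Gamma.monotoneOn_deriv hlog).congr fun x hx => ?_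
  rw [Function.comp_def, deriv.log (differentiableAt_Gamma_of_pos hx) (Gamma_pos_of_pos hx).ne',
    logDeriv_apply]

theorem logDeriv_Gamma_two : logDeriv Gamma 2 = 1 - eulerMascheroniConstant := by
  have h := deriv_Gamma_nat 1
  norm_num [harmonic_succ] at h
  rw [logDeriv_apply, h, Gamma_two]
  ring

theorem logDeriv_Gamma_le_of_le_two {x : ℝ} (hx₀ : 0 < x) (hx₂ : x ≤ 2) :
    logDeriv Gamma x ≤ 1 - eulerMascheroniConstant :=
  logDeriv_Gamma_two ▸ monotoneOn_logDeriv_Gamma hx₀ (mem_Ioi.2 two_pos) hx₂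

theorem Gamma_le_one_of_mem_Icc {x : ℝ} (hx : x ∈ Icc 1 2) : Gamma x ≤ 1 := by
  simpa [Gamma_one, Gamma_two] using
    convexOn_Gamma.le_max_of_mem_Icc (mem_Ioi.2 one_pos) (mem_Ioi.2 two_pos) hx

end Real

theorem one_le_deriv_inv_Gamma_neg_sub_mul {ρ L : ℝ} (hρ : ρ ∈ Ioo 0 1)
    (hL : 1 - eulerMascheroniConstant + 2 / ρ ≤ L) :
    1 ≤ deriv (fun y => (Gamma (-y))⁻¹) ρ - L * (Gamma (-ρ))⁻¹ := by
  obtain ⟨hρ0, hρ1⟩ := hρ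
  set A := Gamma (2 - ρ)
  set Ψ := logDeriv Gamma (2 - ρ)
  have hA0 : 0 < A := Gamma_pos_of_pos (by linarith)
  have hA1 : A ≤ 1 := Gamma_le_one_of_mem_Icc ⟨by linarith, by linarith⟩
  have hΨ : Ψ ≤ 1 - eulerMascheroniConstant :=
    logDeriv_Gamma_le_of_le_two (by linarith) (by linarith)
  have hρL : 2 ≤ ρ * (L - (1 - eulerMascheroniConstant)) := by
    have := mul_le_mul_of_nonneg_left hL hρ0.le
    rw [mul_add, mul_div_cancel₀ _ hρ0.ne'] at this
    linarith
  have hform : -((1 - 2 * ρ) + ρ * (1 - ρ) * Ψ) / A - L * (-(ρ * (1 - ρ)) * A⁻¹)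
      = (ρ * (1 - ρ) * (L - Ψ) - (1 - 2 * ρ)) / A := by
    field_simp
    ring
  rw [(hasDerivAt_inv_Gamma_neg (by linarith)).deriv, inv_Gamma_neg, hform, one_le_div hA0]
  nlinarith [mul_le_mul_of_nonneg_left hΨ (mul_pos hρ0 (sub_pos.2 hρ1)).le,
    mul_le_mul_of_nonneg_left hρL (sub_pos.2 hρ1).le]

theorem hasDerivAt_neg_one_div_mul_rpow_mul_Gamma_neg (c : ℝ) {t ρ : ℝ} (ht : 0 < t)
    (hρ : ρ < 2) :
    HasDerivAt (fun x => -1 / (c * t ^ (x + 1) * Gamma (-x)))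
      (-(c * t ^ (ρ + 1))⁻¹ * (deriv (fun y => (Gamma (-y))⁻¹) ρ - log t * (Gamma (-ρ))⁻¹)) ρ := by
  have hpow : HasDerivAt (fun x => t ^ (x + 1)) (t ^ (ρ + 1) * log t) ρ :=
    ((hasStrictDerivAt_const_rpow ht (ρ + 1)).hasDerivAt.comp ρ
      ((hasDerivAt_id ρ).add_const 1)).congr_deriv (mul_one _)
  have hinv := (hasDerivAt_inv_Gamma_neg hρ).differentiableAt.hasDerivAt
  have hfun : (fun x => -1 / (c * t ^ (x + 1) * Gamma (-x)))
      = fun x => -c⁻¹ * ((t ^ (x + 1))⁻¹ * (Gamma (-x))⁻¹) := by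
    funext x
    simp only [neg_div, one_div, mul_inv]
    ring
  rw [hfun]
  refine (((hpow.inv (rpow_pos_of_pos ht _).ne').mul hinv).const_mul _).congr_deriv ?_
  simp only [Pi.inv_apply]
  field_simp
  ring

theorem statement10_general (ρ₀ : ℝ) (hρ₀ : ρ₀ ∈ Set.Ioo (0 : ℝ) 1) (lam : ℝ)
    (t₀ : ℝ)
    (ht₀ : Real.exp (1 - Real.eulerMascheroniConstant) * Real.exp (2 / ρ₀) ≤ t₀)
    (f₁ : ℝ → ℝ)
    (hf₁ : f₁ = fun ρ : ℝ => -1 / (lam ^ 2 * t₀ ^ (ρ + 1) * Real.Gamma (-ρ)))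
    (ρ : ℝ) (hρ : ρ ∈ Set.Ico ρ₀ 1) :
    deriv f₁ ρ ≤ -1 / (lam ^ 2 * t₀ ^ (ρ + 1)) := by
  have hρ0 : 0 < ρ := hρ₀.1.trans_le hρ.1
  have ht₀0 : 0 < t₀ := lt_of_lt_of_le (by positivity) ht₀
  have hlog : 1 - eulerMascheroniConstant + 2 / ρ ≤ log t₀ := by
    rw [le_log_iff_exp_le ht₀0, exp_add]
    exact le_trans (mul_le_mul_of_nonneg_left
      (exp_le_exp.2 (div_le_div_of_nonneg_left zero_le_two hρ₀.1 hρ.1)) (exp_pos _).le) ht₀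
  have key := one_le_deriv_inv_Gamma_neg_sub_mul ⟨hρ0, hρ.2⟩ hlog
  have hc : 0 ≤ (lam ^ 2 * t₀ ^ (ρ + 1))⁻¹ := by positivity
  rw [hf₁, (hasDerivAt_neg_one_div_mul_rpow_mul_Gamma_neg _ ht₀0 (by linarith [hρ.2])).deriv,
    neg_div, one_div]
  linarith [mul_le_mul_of_nonneg_left key hc]

/-- Let `γ` be the Euler–Mascheroni constant. For every `ρ₀ ∈ (0,1)`, `λ > 0` and
`t₀ ≥ e^{1-γ} e^{2/ρ₀}`, the function `f₁(ρ) = -1/(λ² t₀^{ρ+1} Γ(-ρ))` satisfies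
`f₁'(ρ) ≤ -1/(λ² t₀^{ρ+1})` for all `ρ ∈ [ρ₀, 1)`. -/
theorem statement10 (ρ₀ : ℝ) (hρ₀ : ρ₀ ∈ Set.Ioo (0 : ℝ) 1) (lam : ℝ) (hlam : 0 < lam)
    (t₀ : ℝ)
    (ht₀ : Real.exp (1 - Real.eulerMascheroniConstant) * Real.exp (2 / ρ₀) ≤ t₀)
    (f₁ : ℝ → ℝ)
    (hf₁ : f₁ = fun ρ : ℝ => -1 / (lam ^ 2 * t₀ ^ (ρ + 1) * Real.Gamma (-ρ)))
    (ρ : ℝ) (hρ : ρ ∈ Set.Ico ρ₀ 1) :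
    deriv f₁ ρ ≤ -1 / (lam ^ 2 * t₀ ^ (ρ + 1)) :=
  statement10_general ρ₀ hρ₀ lam t₀ ht₀ f₁ hf₁ ρ hρ
end

section
/- Let a = 3π/4. For ρ ∈ (0,1), λ > 0, t_0 > 0 define f_{21}(ρ) = (a/(2π λ² t_0^{ρ+1})) ∫_{-1}^{1} e^{e^{ias}} e^{ias} e^{2iaρs} (e^{iaρs} + λ t_0^ρ)^{-1} ds (a complex integral over s ∈ [-1,1]). Then for every ρ_0 ∈ (0,1) and λ_1 > 0 there exist constants C > 0 and T_0 > 1 depending only on ρ_0 and λ_1 such that for all t_0 ≥ T_0, all λ ≥ λ_1, and all ρ ∈ [ρ_0, 1), f_{21} is differentiable at ρ and |f_{21}'(ρ)| ≤ C ln t_0 / (λ³ t_0^{2ρ+1}). -/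
/-!
Write `f₂₁ = c · F` with `c(ρ) = a / (2π λ² t₀^{ρ+1})`, so that `c' = -c log t₀`, and `F(ρ)` the
arc integral. Once `P = λ t₀^ρ ≥ 2` (which holds uniformly for `ρ ≥ ρ₀/2` when `t₀` is large),
the denominator `e^{iaρs} + P` has modulus at least `P/2`, so the integrand is `O(1/P)` and its
`ρ`-derivative is `O(log t₀ / P)`; this domination also justifies differentiating under the
integral sign. Hence `|f₂₁'| ≲ c log t₀ / P`, and `c / P = 3 / (8 λ³ t₀^{2ρ+1})`.
-/

open MeasureTheory Complex

/-- The contribution of the circular-arc part of the Hankel contour `δ(1; 3πρ/4)` in the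
integral representation of `t₀^{ρ-1} E_{ρ,ρ}(-λ t₀^ρ)`, with `a = 3π/4`:
`f₂₁(ρ) = (a/(2π λ² t₀^{ρ+1})) ∫_{-1}^{1} e^{e^{ias}} e^{ias} e^{2iaρs} (e^{iaρs} + λ t₀^ρ)⁻¹ ds`. -/
noncomputable def f21 (lam t₀ ρ : ℝ) : ℂ :=
  (((3 * Real.pi / 4) / (2 * Real.pi * lam ^ 2 * t₀ ^ (ρ + 1)) : ℝ) : ℂ) *
    ∫ s in (-1 : ℝ)..1,
      Complex.exp (Complex.exp (Complex.I * ((3 * Real.pi / 4 : ℝ) : ℂ) * (s : ℂ))) *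
        Complex.exp (Complex.I * ((3 * Real.pi / 4 : ℝ) : ℂ) * (s : ℂ)) *
        Complex.exp (2 * Complex.I * ((3 * Real.pi / 4 : ℝ) : ℂ) * (ρ : ℂ) * (s : ℂ)) /
        (Complex.exp (Complex.I * ((3 * Real.pi / 4 : ℝ) : ℂ) * (ρ : ℂ) * (s : ℂ)) +
          ((lam * t₀ ^ ρ : ℝ) : ℂ))

theorem le_mul_rpow_of_rpow_inv_le {c lam₁ lam t₀ ε x : ℝ} (hc : 0 ≤ c) (hlam₁ : 0 < lam₁)
    (hlam : lam₁ ≤ lam) (hε : 0 < ε) (ht₀ : 1 ≤ t₀) (hT : (c / lam₁) ^ ε⁻¹ ≤ t₀) (hx : ε ≤ x) :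
    c ≤ lam * t₀ ^ x := by
  have hcl : 0 ≤ c / lam₁ := div_nonneg hc hlam₁.le
  have h : c / lam₁ ≤ t₀ ^ x :=
    calc c / lam₁ = ((c / lam₁) ^ ε⁻¹) ^ ε := (Real.rpow_inv_rpow hcl hε.ne').symm
      _ ≤ t₀ ^ ε := by gcongr
      _ ≤ t₀ ^ x := Real.rpow_le_rpow_of_exponent_le ht₀ hx
  calc c = lam₁ * (c / lam₁) := by field_simp
    _ ≤ lam * t₀ ^ x := mul_le_mul hlam h hcl (hlam₁.trans_le hlam).le

theorem hasDerivAt_const_div_mul_rpow (A : ℝ) {B t₀ : ℝ} (hB : B ≠ 0) (ht₀ : 0 < t₀) (ρ : ℝ) :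
    HasDerivAt (fun x => A / (B * t₀ ^ (x + 1))) (-(A / (B * t₀ ^ (ρ + 1))) * Real.log t₀) ρ := by
  have hpow := (((Real.hasStrictDerivAt_const_rpow ht₀ (ρ + 1)).hasDerivAt).comp_add_const
    ρ 1).const_mul B
  refine ((hasDerivAt_const ρ A).div hpow (by positivity)).congr_deriv ?_
  field_simp
  ring

theorem norm_quotient_deriv_le {𝕜 : Type*} [NormedField 𝕜] {n n' d d' : 𝕜}
    {M M' δ Δ Δ' : ℝ} (hn : ‖n‖ ≤ M) (hn' : ‖n'‖ ≤ M') (hδ : 0 < δ) (hδd : δ ≤ ‖d‖)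
    (hdΔ : ‖d‖ ≤ Δ) (hd' : ‖d'‖ ≤ Δ') :
    ‖(n' * d - n * d') / d ^ 2‖ ≤ (M' * Δ + M * Δ') / δ ^ 2 := by
  rw [norm_div, norm_pow]
  have hM := (norm_nonneg _).trans hn
  have hM' := (norm_nonneg _).trans hn'
  have hΔ := (norm_nonneg _).trans hdΔ
  have hΔ' := (norm_nonneg _).trans hd'
  refine div_le_div₀ (by positivity) ?_ (by positivity) (pow_le_pow_left₀ hδ.le hδd 2)
  refine (norm_sub_le _ _).trans (add_le_add ?_ ?_) <;> rw [norm_mul]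
  · exact mul_le_mul hn' hdΔ (norm_nonneg _) hM'
  · exact mul_le_mul hn hd' (norm_nonneg _) hM

section ArcIntegrand

variable (a lam t₀ : ℝ)

noncomputable def arcNumerator (ρ s : ℝ) : ℂ :=
  exp (exp (I * a * s)) * exp (I * a * s) * exp (2 * I * a * ρ * s)

noncomputable def arcDenominator (ρ s : ℝ) : ℂ :=
  exp (I * a * ρ * s) + ((lam * t₀ ^ ρ : ℝ) : ℂ)

noncomputable def arcDenominatorDeriv (ρ s : ℝ) : ℂ :=
  I * a * s * exp (I * a * ρ * s) + ((lam * t₀ ^ ρ * Real.log t₀ : ℝ) : ℂ)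

noncomputable def arcIntegrandDeriv (ρ s : ℝ) : ℂ :=
  (2 * I * a * s * arcNumerator a ρ s * arcDenominator a lam t₀ ρ s -
    arcNumerator a ρ s * arcDenominatorDeriv a lam t₀ ρ s) / arcDenominator a lam t₀ ρ s ^ 2

noncomputable def arcIntegral (ρ : ℝ) : ℂ :=
  ∫ s in (-1 : ℝ)..1, arcNumerator a ρ s / arcDenominator a lam t₀ ρ s

theorem norm_exp_I_mul_ofReal_mul (ρ s : ℝ) : ‖exp (I * a * ρ * s)‖ = 1 := by
  simp [norm_exp, mul_re]

theorem norm_arcDenominator_ge (ρ s : ℝ) :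
    lam * t₀ ^ ρ - 1 ≤ ‖arcDenominator a lam t₀ ρ s‖ := by
  have h := norm_sub_le_norm_add ((lam * t₀ ^ ρ : ℝ) : ℂ) (exp (I * a * ρ * s))
  rw [add_comm, norm_real, Real.norm_eq_abs, norm_exp_I_mul_ofReal_mul] at h
  exact (sub_le_sub_right (le_abs_self _) 1).trans h

variable {a lam t₀}

theorem hasDerivAt_arcNumerator (ρ s : ℝ) :
    HasDerivAt (arcNumerator a · s) (2 * I * a * s * arcNumerator a ρ s) ρ := by
  have h := ((((hasDerivAt_id ρ).ofReal_comp).const_mul (2 * I * a)).mul_const (s : ℂ)).cexp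
  refine (h.const_mul (exp (exp (I * a * s)) * exp (I * a * s))).congr_deriv ?_
  simp only [arcNumerator, id, ofReal_one]; ring

theorem hasDerivAt_arcDenominator (ht₀ : 0 < t₀) (ρ s : ℝ) :
    HasDerivAt (arcDenominator a lam t₀ · s) (arcDenominatorDeriv a lam t₀ ρ s) ρ := by
  have hexp := ((((hasDerivAt_id ρ).ofReal_comp).const_mul (I * a)).mul_const (s : ℂ)).cexp
  have hpow := (((Real.hasStrictDerivAt_const_rpow ht₀ ρ).hasDerivAt).const_mul lam).ofReal_comp
  refine (hexp.add hpow).congr_deriv ?_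
  simp only [arcDenominatorDeriv, id, ofReal_one]; push_cast; ring

theorem norm_arcNumerator_le (ρ s : ℝ) : ‖arcNumerator a ρ s‖ ≤ Real.exp 1 := by
  have h : ‖exp (I * a * s)‖ = 1 := by simp [norm_exp, mul_re]
  have h2 : ‖exp (2 * I * a * ρ * s)‖ = 1 := by simp [norm_exp, mul_re]
  rw [arcNumerator, norm_mul, norm_mul, h, h2, mul_one, mul_one, norm_exp]
  exact Real.exp_le_exp.2 ((re_le_norm _).trans h.le)

theorem norm_arcDenominator_le {ρ : ℝ} (hP : 0 ≤ lam * t₀ ^ ρ) (s : ℝ) :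
    ‖arcDenominator a lam t₀ ρ s‖ ≤ 1 + lam * t₀ ^ ρ := by
  refine (norm_add_le _ _).trans_eq ?_
  rw [norm_exp_I_mul_ofReal_mul, norm_real, Real.norm_eq_abs, abs_of_nonneg hP]

theorem norm_arcDenominatorDeriv_le {ρ s : ℝ} (hs : |s| ≤ 1)
    (hPL : 0 ≤ lam * t₀ ^ ρ * Real.log t₀) :
    ‖arcDenominatorDeriv a lam t₀ ρ s‖ ≤ |a| + lam * t₀ ^ ρ * Real.log t₀ := by
  refine (norm_add_le _ _).trans (add_le_add ?_ ?_)
  · simp only [norm_mul, norm_exp_I_mul_ofReal_mul, norm_I, norm_real, Real.norm_eq_abs, one_mul,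
      mul_one]
    exact mul_le_of_le_one_right (abs_nonneg a) hs
  · rw [norm_real, Real.norm_eq_abs, abs_of_nonneg hPL]

theorem norm_arcIntegrandDeriv_le {ρ s : ℝ} (hs : |s| ≤ 1) (hP : 2 ≤ lam * t₀ ^ ρ)
    (hL : 1 ≤ Real.log t₀) :
    ‖arcIntegrandDeriv a lam t₀ ρ s‖ ≤
      (14 * |a| + 4) * Real.exp 1 * Real.log t₀ / (lam * t₀ ^ ρ) := by
  set P := lam * t₀ ^ ρ
  set L := Real.log t₀
  set E := Real.exp 1
  have hPL : 2 ≤ P * L := by nlinarith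
  have hN' : ‖2 * I * a * s * arcNumerator a ρ s‖ ≤ 2 * |a| * E := by
    simp only [norm_mul, norm_I, norm_real, Real.norm_eq_abs, mul_one]
    have h2 : ‖(2 : ℂ)‖ = 2 := by norm_num
    rw [h2, mul_assoc 2]
    gcongr
    · exact mul_le_of_le_one_right (abs_nonneg a) hs
    · exact norm_arcNumerator_le ρ s
  refine (norm_quotient_deriv_le (norm_arcNumerator_le ρ s) hN' (δ := P / 2) (by positivity)
    (by linarith [norm_arcDenominator_ge a lam t₀ ρ s])
    (norm_arcDenominator_le (by linarith) s)
    (norm_arcDenominatorDeriv_le hs (by positivity))).trans ?_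
  have hnum : 2 * |a| * (1 + P) + (|a| + P * L) ≤ (7 / 2 * |a| + 1) * (P * L) := by
    have h1 : |a| * 2 ≤ |a| * (P * L) := mul_le_mul_of_nonneg_left hPL (abs_nonneg a)
    have h2 : |a| * P ≤ |a| * (P * L) :=
      mul_le_mul_of_nonneg_left (le_mul_of_one_le_right (by linarith) hL) (abs_nonneg a)
    linarith
  calc (2 * |a| * E * (1 + P) + E * (|a| + P * L)) / (P / 2) ^ 2
      = E * (2 * |a| * (1 + P) + (|a| + P * L)) / (P / 2) ^ 2 := by ring
    _ ≤ E * ((7 / 2 * |a| + 1) * (P * L)) / (P / 2) ^ 2 := by gcongr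
    _ = (14 * |a| + 4) * E * L / P := by field_simp; ring

theorem hasDerivAt_arcIntegral {ρ ε : ℝ} (ht₀ : 0 < t₀) (hL : 1 ≤ Real.log t₀) (hε : 0 < ε)
    (hP : ∀ x ∈ Metric.ball ρ ε, 2 ≤ lam * t₀ ^ x) :
    HasDerivAt (arcIntegral a lam t₀) (∫ s in (-1 : ℝ)..1, arcIntegrandDeriv a lam t₀ ρ s) ρ := by
  have hD : ∀ x ∈ Metric.ball ρ ε, ∀ s, arcDenominator a lam t₀ x s ≠ 0 := fun x hx s =>
    norm_pos_iff.1 (by linarith [norm_arcDenominator_ge a lam t₀ x s, hP x hx])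
  have hs : ∀ s ∈ Set.uIoc (-1 : ℝ) 1, |s| ≤ 1 := fun s hs => by
    rw [Set.uIoc_of_le (by norm_num)] at hs
    exact abs_le.2 ⟨hs.1.le, hs.2⟩
  refine (intervalIntegral.hasDerivAt_integral_of_dominated_loc_of_deriv_le
    (bound := fun _ => (14 * |a| + 4) * Real.exp 1 * Real.log t₀ / 2)
    (Metric.ball_mem_nhds ρ hε) (Filter.Eventually.of_forall fun x => ?_) ?_ ?_
    (ae_of_all _ fun s hs' x hx => ?_) intervalIntegrable_const
    (ae_of_all _ fun s _ x hx => ?_)).2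
  · refine Measurable.aestronglyMeasurable ?_
    unfold arcNumerator arcDenominator
    fun_prop
  · refine Continuous.intervalIntegrable ?_ _ _
    exact Continuous.div (by unfold arcNumerator; fun_prop) (by unfold arcDenominator; fun_prop)
      (hD ρ (Metric.mem_ball_self hε))
  · refine Measurable.aestronglyMeasurable ?_
    unfold arcIntegrandDeriv arcNumerator arcDenominator arcDenominatorDeriv
    fun_prop
  · exact (norm_arcIntegrandDeriv_le (hs s hs') (hP x hx) hL).trans
      (div_le_div_of_nonneg_left (by positivity) two_pos (hP x hx))
  · exact (hasDerivAt_arcNumerator x s).div (hasDerivAt_arcDenominator ht₀ x s) (hD x hx s)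

theorem norm_arcIntegral_le {ρ : ℝ} (hP : 2 ≤ lam * t₀ ^ ρ) :
    ‖arcIntegral a lam t₀ ρ‖ ≤ 4 * Real.exp 1 / (lam * t₀ ^ ρ) := by
  have h : ∀ s ∈ Set.uIoc (-1 : ℝ) 1,
      ‖arcNumerator a ρ s / arcDenominator a lam t₀ ρ s‖ ≤ Real.exp 1 / (lam * t₀ ^ ρ / 2) :=
    fun s _ => by
      rw [norm_div]
      exact div_le_div₀ (Real.exp_pos 1).le (norm_arcNumerator_le ρ s) (by positivity)
        (by linarith [norm_arcDenominator_ge a lam t₀ ρ s])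
  refine (intervalIntegral.norm_integral_le_of_norm_le_const h).trans_eq ?_
  norm_num
  field_simp
  ring

theorem norm_integral_arcIntegrandDeriv_le {ρ : ℝ} (hP : 2 ≤ lam * t₀ ^ ρ)
    (hL : 1 ≤ Real.log t₀) :
    ‖∫ s in (-1 : ℝ)..1, arcIntegrandDeriv a lam t₀ ρ s‖ ≤
      2 * ((14 * |a| + 4) * Real.exp 1 * Real.log t₀ / (lam * t₀ ^ ρ)) := by
  refine (intervalIntegral.norm_integral_le_of_norm_le_const
    (C := (14 * |a| + 4) * Real.exp 1 * Real.log t₀ / (lam * t₀ ^ ρ)) fun s hs => ?_).trans_eq ?_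
  · rw [Set.uIoc_of_le (by norm_num)] at hs
    exact norm_arcIntegrandDeriv_le (abs_le.2 ⟨hs.1.le, hs.2⟩) hP hL
  · norm_num; ring

end ArcIntegrand

noncomputable def f21Prefactor (lam t₀ ρ : ℝ) : ℝ :=
  3 * Real.pi / 4 / (2 * Real.pi * lam ^ 2 * t₀ ^ (ρ + 1))

theorem f21_eq (lam t₀ : ℝ) :
    f21 lam t₀ = fun ρ => (f21Prefactor lam t₀ ρ : ℂ) * arcIntegral (3 * Real.pi / 4) lam t₀ ρ :=
  rfl

theorem hasDerivAt_f21 {lam t₀ ρ ε : ℝ} (hlam : lam ≠ 0) (ht₀ : 0 < t₀)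
    (hL : 1 ≤ Real.log t₀) (hε : 0 < ε) (hP : ∀ x ∈ Metric.ball ρ ε, 2 ≤ lam * t₀ ^ x) :
    HasDerivAt (f21 lam t₀)
      (((-f21Prefactor lam t₀ ρ * Real.log t₀ : ℝ) : ℂ) * arcIntegral (3 * Real.pi / 4) lam t₀ ρ +
        (f21Prefactor lam t₀ ρ : ℂ) *
          ∫ s in (-1 : ℝ)..1, arcIntegrandDeriv (3 * Real.pi / 4) lam t₀ ρ s) ρ := by
  rw [f21_eq]
  exact ((hasDerivAt_const_div_mul_rpow _ (by positivity) ht₀ ρ).ofReal_comp).mul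
    (hasDerivAt_arcIntegral ht₀ hL hε hP)

theorem norm_deriv_f21_le {lam t₀ ρ : ℝ} (hlam : 0 < lam) (ht₀ : 0 < t₀)
    (hL : 1 ≤ Real.log t₀) (hP : 2 ≤ lam * t₀ ^ ρ) :
    ‖((-f21Prefactor lam t₀ ρ * Real.log t₀ : ℝ) : ℂ) * arcIntegral (3 * Real.pi / 4) lam t₀ ρ +
        (f21Prefactor lam t₀ ρ : ℂ) *
          ∫ s in (-1 : ℝ)..1, arcIntegrandDeriv (3 * Real.pi / 4) lam t₀ ρ s‖ ≤
      3 * (12 + 21 * Real.pi) * Real.exp 1 / 8 * Real.log t₀ / (lam ^ 3 * t₀ ^ (2 * ρ + 1)) := by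
  have hc : 0 < f21Prefactor lam t₀ ρ := by unfold f21Prefactor; positivity
  have hcL : 0 ≤ f21Prefactor lam t₀ ρ * Real.log t₀ := by positivity
  have ha : |3 * Real.pi / 4| = 3 * Real.pi / 4 := abs_of_pos (by positivity)
  have ht : t₀ ^ (2 * ρ + 1) = t₀ ^ (ρ + 1) * t₀ ^ ρ := by
    rw [← Real.rpow_add ht₀]; ring_nf
  calc _ ≤ f21Prefactor lam t₀ ρ * Real.log t₀ * (4 * Real.exp 1 / (lam * t₀ ^ ρ)) +
        f21Prefactor lam t₀ ρ * (2 * ((14 * |3 * Real.pi / 4| + 4) * Real.exp 1 * Real.log t₀ /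
          (lam * t₀ ^ ρ))) := by
        refine (norm_add_le _ _).trans ?_
        rw [norm_mul, norm_mul, norm_real, norm_real, Real.norm_eq_abs, Real.norm_eq_abs,
          neg_mul, abs_neg, abs_of_nonneg hcL, abs_of_pos hc]
        gcongr
        · exact norm_arcIntegral_le hP
        · exact norm_integral_arcIntegrandDeriv_le hP hL
    _ = _ := by
        rw [ha, ht, f21Prefactor]
        field_simp
        ring

/-- For every `ρ₀ ∈ (0,1)` and `λ₁ > 0` there exist `C > 0` and `T₀ > 1` such that for all
`t₀ ≥ T₀`, `λ ≥ λ₁` and `ρ ∈ [ρ₀, 1)`, `f₂₁` is differentiable at `ρ` and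
`|f₂₁'(ρ)| ≤ C ln t₀ / (λ³ t₀^{2ρ+1})`. -/
theorem statement12 (ρ₀ : ℝ) (hρ₀ : ρ₀ ∈ Set.Ioo (0 : ℝ) 1) (lam₁ : ℝ) (hlam₁ : 0 < lam₁) :
    ∃ C : ℝ, 0 < C ∧ ∃ T₀ : ℝ, 1 < T₀ ∧
      ∀ t₀ : ℝ, T₀ ≤ t₀ → ∀ lam : ℝ, lam₁ ≤ lam → ∀ ρ ∈ Set.Ico ρ₀ 1,
        DifferentiableAt ℝ (f21 lam t₀) ρ ∧
        ‖deriv (f21 lam t₀) ρ‖ ≤ C * Real.log t₀ / (lam ^ 3 * t₀ ^ (2 * ρ + 1)) := by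
  obtain ⟨hρ₀, -⟩ := hρ₀
  refine ⟨3 * (12 + 21 * Real.pi) * Real.exp 1 / 8, by positivity,
    max (Real.exp 1) ((2 / lam₁) ^ (ρ₀ / 2)⁻¹), lt_max_of_lt_left (Real.one_lt_exp_iff.2 one_pos),
    ?_⟩
  rintro t₀ ht₀ lam hlam ρ ⟨hρ, -⟩
  have he : Real.exp 1 ≤ t₀ := le_of_max_le_left ht₀
  have ht₀pos : 0 < t₀ := (Real.exp_pos 1).trans_le he
  have hL : 1 ≤ Real.log t₀ := (Real.le_log_iff_exp_le ht₀pos).2 he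
  have hP : ∀ x ∈ Metric.ball ρ (ρ₀ / 2), 2 ≤ lam * t₀ ^ x := fun x hx =>
    le_mul_rpow_of_rpow_inv_le two_pos.le hlam₁ hlam (by positivity)
      (le_trans (Real.one_le_exp zero_le_one) he) (le_of_max_le_right ht₀)
      (by linarith [(abs_lt.1 (Metric.mem_ball.1 hx)).1])
  have hf := hasDerivAt_f21 (hlam₁.trans_le hlam).ne' ht₀pos hL (by positivity) hP
  refine ⟨hf.differentiableAt, hf.deriv ▸ ?_⟩
  exact norm_deriv_f21_le (hlam₁.trans_le hlam) ht₀pos hL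
    (hP ρ (Metric.mem_ball_self (by positivity)))
end
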